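/- Let v_1, v_2 ∈ ℝ^n, let C : ℝ^n → ℝ^n be a positive definite self-adjoint linear transformation, and suppose there exist constants γ_1, γ_2 > 0 and Γ_1, Γ_2, Γ_3, Γ_4 > 0 such that (1) ||C v_i − γ_i v_i|| ≤ Γ_1 for i = 1,2; (2) |⟨C v_i − γ_i v_i, v_j⟩| ≤ Γ_2 for i ≠ j; (3) |⟨v_1, v_2⟩| ≤ Γ_3; and (4) the smallest eigenvalue of C is at least Γ_4. Then |⟨C^{−1} v_1, v_2⟩| ≤ Γ_3/γ_1 + Γ_2/(γ_1γ_2) + Γ_1²/(γ_1γ_2Γ_4). -/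
import Mathlib


open Real InnerProductSpace

noncomputable section

private lemma coercive (n : ℕ) (C : EuclideanSpace ℝ (Fin n) →ₗ[ℝ] EuclideanSpace ℝ (Fin n))
    (hsym : LinearMap.IsSymmetric C) (Γ₄ : ℝ)
    (h4 : ∀ μ : ℝ, Module.End.HasEigenvalue C μ → Γ₄ ≤ μ)
    (x : EuclideanSpace ℝ (Fin n)) : Γ₄ * ‖x‖^2 ≤ ⟪x, C x⟫_ℝ := by
  have hn : Module.finrank ℝ (EuclideanSpace ℝ (Fin n)) = n := by simp
  set b := hsym.eigenvectorBasis hn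
  have hb : ∀ i, C (b i) = (hsym.eigenvalues hn i) • b i := fun i =>
    hsym.apply_eigenvectorBasis hn i
  have hev : ∀ i, Γ₄ ≤ hsym.eigenvalues hn i := fun i =>
    h4 _ (hsym.hasEigenvalue_eigenvalues hn i)
  have h1 : ⟪x, C x⟫_ℝ = ∑ i, hsym.eigenvalues hn i * (⟪x, b i⟫_ℝ)^2 := by
    rw [← b.sum_inner_mul_inner x (C x)]
    congr 1; ext i
    rw [← hsym (b i) x, hb i, real_inner_smul_left, real_inner_comm]
    ring
  have h2 : ‖x‖^2 = ∑ i, (⟪x, b i⟫_ℝ)^2 := by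
    rw [← real_inner_self_eq_norm_sq, ← b.sum_inner_mul_inner x x]
    congr 1; ext i
    rw [real_inner_comm (b i) x]; ring
  rw [h1, h2, Finset.mul_sum]
  exact Finset.sum_le_sum fun i _ => mul_le_mul_of_nonneg_right (hev i) (sq_nonneg _)

/-- If `v₁, v₂ ∈ ℝ^n`, `C` is a positive definite self-adjoint linear
transformation whose smallest eigenvalue is at least `Γ₄`, and conditions (1)–(3) hold,
then `|⟨C⁻¹v₁, v₂⟩| ≤ Γ₃/γ₁ + Γ₂/(γ₁γ₂) + Γ₁²/(γ₁γ₂Γ₄)` (where `C⁻¹v₁` is the unique `w`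
with `C w = v₁`). -/
theorem statement10 (n : ℕ) (v₁ v₂ : EuclideanSpace ℝ (Fin n))
    (C : EuclideanSpace ℝ (Fin n) →ₗ[ℝ] EuclideanSpace ℝ (Fin n))
    (hsym : LinearMap.IsSymmetric C)
    (hpos : ∀ v : EuclideanSpace ℝ (Fin n), v ≠ 0 → 0 < ⟪v, C v⟫_ℝ)
    (γ₁ γ₂ Γ₁ Γ₂ Γ₃ Γ₄ : ℝ)
    (hγ₁ : 0 < γ₁) (hγ₂ : 0 < γ₂) (hΓ₁ : 0 < Γ₁) (hΓ₂ : 0 < Γ₂) (hΓ₃ : 0 < Γ₃) (hΓ₄ : 0 < Γ₄)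
    (h1a : ‖C v₁ - γ₁ • v₁‖ ≤ Γ₁) (h1b : ‖C v₂ - γ₂ • v₂‖ ≤ Γ₁)
    (h2a : |⟪C v₁ - γ₁ • v₁, v₂⟫_ℝ| ≤ Γ₂) (h2b : |⟪C v₂ - γ₂ • v₂, v₁⟫_ℝ| ≤ Γ₂)
    (h3 : |⟪v₁, v₂⟫_ℝ| ≤ Γ₃)
    (h4 : ∀ μ : ℝ, Module.End.HasEigenvalue C μ → Γ₄ ≤ μ) :
    ∀ w : EuclideanSpace ℝ (Fin n), C w = v₁ →
      |⟪w, v₂⟫_ℝ| ≤ Γ₃ / γ₁ + Γ₂ / (γ₁ * γ₂) + Γ₁^2 / (γ₁ * γ₂ * Γ₄) := by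
  intro w hw
  set u : EuclideanSpace ℝ (Fin n) := v₁ - γ₁ • w with hu
  have hCu : C u = C v₁ - γ₁ • v₁ := by
    simp [hu, map_sub, map_smul, hw]
  -- bound on ‖u‖
  have hcoer := coercive n C hsym Γ₄ h4 u
  have hCun : ‖C u‖ ≤ Γ₁ := by rw [hCu]; exact h1a
  have hub : ‖u‖ ≤ Γ₁ / Γ₄ := by
    rw [le_div_iff₀ hΓ₄]
    have h5 : ⟪u, C u⟫_ℝ ≤ ‖u‖ * ‖C u‖ := real_inner_le_norm u (C u)
    have h6 : ‖u‖ * ‖C u‖ ≤ ‖u‖ * Γ₁ := by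
      exact mul_le_mul_of_nonneg_left hCun (norm_nonneg u)
    nlinarith [norm_nonneg u, sq_nonneg (‖u‖)]
  -- ⟪u, C v₂⟫ = ⟪C v₁ - γ₁ v₁, v₂⟫
  have key2 : ⟪u, C v₂⟫_ℝ = ⟪C v₁ - γ₁ • v₁, v₂⟫_ℝ := by
    rw [← hsym u v₂, hCu]
  -- bound on |⟪u, v₂⟫|
  have eq2 : γ₂ * ⟪u, v₂⟫_ℝ = ⟪C v₁ - γ₁ • v₁, v₂⟫_ℝ - ⟪u, C v₂ - γ₂ • v₂⟫_ℝ := by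
    rw [inner_sub_right, key2, real_inner_smul_right]; ring
  have hur : |⟪u, C v₂ - γ₂ • v₂⟫_ℝ| ≤ (Γ₁ / Γ₄) * Γ₁ := by
    calc |⟪u, C v₂ - γ₂ • v₂⟫_ℝ| ≤ ‖u‖ * ‖C v₂ - γ₂ • v₂‖ := abs_real_inner_le_norm _ _
      _ ≤ (Γ₁ / Γ₄) * Γ₁ := by
          apply mul_le_mul hub h1b (norm_nonneg _) (by positivity)
  have huv : |⟪u, v₂⟫_ℝ| ≤ (Γ₂ + Γ₁^2 / Γ₄) / γ₂ := by
    rw [le_div_iff₀ hγ₂]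
    have : |γ₂ * ⟪u, v₂⟫_ℝ| ≤ Γ₂ + Γ₁^2 / Γ₄ := by
      rw [eq2]
      calc |⟪C v₁ - γ₁ • v₁, v₂⟫_ℝ - ⟪u, C v₂ - γ₂ • v₂⟫_ℝ|
          ≤ |⟪C v₁ - γ₁ • v₁, v₂⟫_ℝ| + |⟪u, C v₂ - γ₂ • v₂⟫_ℝ| := abs_sub _ _
        _ ≤ Γ₂ + Γ₁^2 / Γ₄ := by
            apply add_le_add h2a
            calc |⟪u, C v₂ - γ₂ • v₂⟫_ℝ| ≤ (Γ₁ / Γ₄) * Γ₁ := hur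
              _ = Γ₁^2 / Γ₄ := by ring
    rw [abs_mul, abs_of_pos hγ₂] at this
    linarith
  -- final
  have eq1 : γ₁ * ⟪w, v₂⟫_ℝ = ⟪v₁, v₂⟫_ℝ - ⟪u, v₂⟫_ℝ := by
    rw [hu, inner_sub_left, real_inner_smul_left]; ring
  have hfin : |γ₁ * ⟪w, v₂⟫_ℝ| ≤ Γ₃ + (Γ₂ + Γ₁^2 / Γ₄) / γ₂ := by
    rw [eq1]
    calc |⟪v₁, v₂⟫_ℝ - ⟪u, v₂⟫_ℝ| ≤ |⟪v₁, v₂⟫_ℝ| + |⟪u, v₂⟫_ℝ| := abs_sub _ _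
      _ ≤ Γ₃ + (Γ₂ + Γ₁^2 / Γ₄) / γ₂ := add_le_add h3 huv
  rw [abs_mul, abs_of_pos hγ₁] at hfin
  have : |⟪w, v₂⟫_ℝ| ≤ (Γ₃ + (Γ₂ + Γ₁^2 / Γ₄) / γ₂) / γ₁ := by
    rw [le_div_iff₀ hγ₁]; linarith
  calc |⟪w, v₂⟫_ℝ| ≤ (Γ₃ + (Γ₂ + Γ₁^2 / Γ₄) / γ₂) / γ₁ := this
    _ = Γ₃ / γ₁ + Γ₂ / (γ₁ * γ₂) + Γ₁^2 / (γ₁ * γ₂ * Γ₄) := by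
        field_simp; ring
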